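/- arXiv:2104.06694 — 2 statements merged into one kernel-verified Lean document; each statement's English description precedes it below -/
import Mathlib

section
/- Let n ≥ 3 and let Q_{2^n} be the generalized quaternion group of order 2^n. Then the proper power graph P**(Q_{2^n}) is a line graph: there exists a graph Γ such that P**(Q_{2^n}) is isomorphic to the line graph of Γ. -/
/-- The power graph of a group `G`: distinct `x, y` are adjacent iff one is a positive
integer power of the other. -/
def powerGraph (G : Type) [Group G] : SimpleGraph G where
  Adj x y := x ≠ y ∧ ((∃ n : ℕ, 0 < n ∧ y ^ n = x) ∨ (∃ n : ℕ, 0 < n ∧ x ^ n = y))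
  symm := by
    constructor
    rintro x y ⟨hxy, h⟩
    exact ⟨hxy.symm, h.symm⟩
  loopless := by
    constructor
    rintro x ⟨h, -⟩
    exact h rfl

/-- A vertex is dominating if it is adjacent to every other vertex. -/
def SimpleGraph.IsDominatingVertex {V : Type} (H : SimpleGraph V) (v : V) : Prop :=
  ∀ u, u ≠ v → H.Adj v u

/-- The proper power graph: the induced subgraph of the power graph on the
set of non-dominating vertices. -/
def properPowerGraph (G : Type) [Group G] :=
  (powerGraph G).induce {x : G | ¬ (powerGraph G).IsDominatingVertex x}

/-- A graph is a line graph if it is isomorphic to the line graph of some graph. -/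
def IsLineGraph {V : Type} (H : SimpleGraph V) : Prop :=
  ∃ (W : Type) (Γ : SimpleGraph W), Nonempty (H ≃g Γ.lineGraph)


/-!
For `m = 2 ^ e`, the dominating vertices of `P(Q_{4m})` are `1` and the unique involution `a m`.
The remaining vertices split into cliques with no edges between them: the elements `a i` with
`i ≠ 0, m`, any two of which are powers of one another because divisibility in
`ZMod (2 ^ (e + 1))` is a total preorder, and the pairs `{xa i, xa (i + m)}`, because the powers
of `xa i` are `1, a m, xa i, xa (i + m)`. A disjoint union of cliques is the line graph of a star
forest with one star per clique.
-/

open SimpleGraph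

section LineGraph

variable {V C : Type}

def starForest (f : V → C) : SimpleGraph (C ⊕ V) :=
  fromRel fun x y => ∃ v, x = .inl (f v) ∧ y = .inr v

lemma starForest_adj_inl_inr (f : V → C) (v : V) :
    (starForest f).Adj (.inl (f v)) (.inr v) :=
  (fromRel_adj _ _ _).2 ⟨Sum.inl_ne_inr, .inl ⟨v, rfl, rfl⟩⟩

def starForestEdge (f : V → C) (v : V) : (starForest f).edgeSet :=
  ⟨s(.inl (f v), .inr v), starForest_adj_inl_inr f v⟩

lemma starForestEdge_bijective (f : V → C) : Function.Bijective (starForestEdge f) := by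
  refine ⟨fun u v huv => ?_, fun ⟨e, he⟩ => ?_⟩
  · have h := congrArg Subtype.val huv
    simp only [starForestEdge, Sym2.eq_iff, Sum.inl.injEq, Sum.inr.injEq, reduceCtorEq,
      and_false, or_false] at h
    exact h.2
  · induction e with
    | h x y =>
      obtain ⟨-, ⟨v, rfl, rfl⟩ | ⟨v, rfl, rfl⟩⟩ := (fromRel_adj _ _ _).1 (mem_edgeSet _ |>.1 he)
      · exact ⟨v, rfl⟩
      · exact ⟨v, Subtype.ext Sym2.eq_swap⟩

lemma starForest_lineGraph_adj_iff (f : V → C) (u v : V) :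
    (starForest f).lineGraph.Adj (starForestEdge f u) (starForestEdge f v) ↔ u ≠ v ∧ f u = f v := by
  rw [lineGraph_adj_iff_exists, (starForestEdge_bijective f).1.ne_iff]
  simp only [starForestEdge, Sym2.mem_iff]
  aesop

theorem isLineGraph_of_adj_iff {H : SimpleGraph V} (f : V → C)
    (h : ∀ x y, H.Adj x y ↔ x ≠ y ∧ f x = f y) : IsLineGraph H :=
  ⟨C ⊕ V, starForest f, ⟨Equiv.ofBijective _ (starForestEdge_bijective f), fun {u v} => by
    rw [Equiv.ofBijective_apply, Equiv.ofBijective_apply, starForest_lineGraph_adj_iff, h]⟩⟩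

end LineGraph

lemma exists_pos_pow_eq_iff_mem_powers {G : Type} [Group G] [Finite G] {x y : G} :
    (∃ n : ℕ, 0 < n ∧ y ^ n = x) ↔ x ∈ Submonoid.powers y := by
  refine ⟨fun ⟨n, _, hn⟩ => ⟨n, hn⟩, fun ⟨n, hn⟩ => ⟨n + orderOf y, ?_, ?_⟩⟩
  · exact Nat.add_pos_right n (orderOf_pos y)
  · rw [pow_add, pow_orderOf_eq_one, mul_one]
    exact hn

lemma powerGraph_adj_iff {G : Type} [Group G] [Finite G] {x y : G} :
    (powerGraph G).Adj x y ↔ x ≠ y ∧ (x ∈ Submonoid.powers y ∨ y ∈ Submonoid.powers x) := by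
  simp only [powerGraph, exists_pos_pow_eq_iff_mem_powers]

lemma powerGraph_isDominatingVertex_one {G : Type} [Group G] [Finite G] :
    (powerGraph G).IsDominatingVertex 1 := fun _ hx =>
  powerGraph_adj_iff.2 ⟨hx.symm, .inl (Submonoid.one_mem _)⟩

namespace ZMod

variable {N : ℕ}

-- `ZMod`'s inverse is defined on non-units too, with `i * i⁻¹ = gcd i.val N`.
lemma dvd_natCast_of_gcd_val_dvd (i : ZMod N) {k : ℕ} (h : i.val.gcd N ∣ k) : i ∣ (k : ZMod N) :=
  (Dvd.intro _ (mul_inv_eq_gcd i)).trans (Nat.cast_dvd_cast h)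

lemma dvd_of_gcd_val_dvd [NeZero N] {i j : ZMod N} (h : i.val.gcd N ∣ j.val.gcd N) : i ∣ j :=
  natCast_zmod_val j ▸ dvd_natCast_of_gcd_val_dvd i (h.trans (Nat.gcd_dvd_left _ _))

lemma dvd_or_dvd_of_eq_prime_pow {p e : ℕ} (hp : p.Prime) (hN : N = p ^ e) (i j : ZMod N) :
    i ∣ j ∨ j ∣ i := by
  subst hN
  have : NeZero (p ^ e) := ⟨pow_ne_zero e hp.ne_zero⟩
  obtain ⟨s, -, hs⟩ := (Nat.dvd_prime_pow hp).1 (Nat.gcd_dvd_right i.val (p ^ e))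
  obtain ⟨t, -, ht⟩ := (Nat.dvd_prime_pow hp).1 (Nat.gcd_dvd_right j.val (p ^ e))
  rcases le_total s t with hst | hst
  · exact .inl (dvd_of_gcd_val_dvd (by rw [hs, ht]; exact pow_dvd_pow p hst))
  · exact .inr (dvd_of_gcd_val_dvd (by rw [hs, ht]; exact pow_dvd_pow p hst))

lemma dvd_natCast_of_eq_prime_pow_succ {p e : ℕ} (hp : p.Prime) (hN : N = p ^ (e + 1))
    {j : ZMod N} (hj : j ≠ 0) : j ∣ ((p ^ e : ℕ) : ZMod N) := by
  subst hN
  have : NeZero (p ^ (e + 1)) := ⟨pow_ne_zero _ hp.ne_zero⟩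
  apply dvd_natCast_of_gcd_val_dvd
  obtain ⟨s, hs, hd⟩ := (Nat.dvd_prime_pow hp).1 (Nat.gcd_dvd_right j.val (p ^ (e + 1)))
  rw [hd]
  refine pow_dvd_pow p (Nat.le_of_lt_succ (hs.lt_of_ne fun hse => hj ?_))
  rw [← val_eq_zero]
  refine Nat.eq_zero_of_dvd_of_lt ?_ (val_lt j)
  simpa [hd, hse] using Nat.gcd_dvd_left j.val (p ^ (e + 1))

end ZMod

namespace QuaternionGroup

variable {m : ℕ}

lemma a_pow (i : ZMod (2 * m)) (k : ℕ) : a i ^ k = a ((k : ZMod (2 * m)) * i) := by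
  induction k with
  | zero => rw [pow_zero, Nat.cast_zero, zero_mul, a_zero]
  | succ k ih => rw [pow_succ, ih, a_mul_a, Nat.cast_succ, add_one_mul]

lemma natCast_add_self : (m : ZMod (2 * m)) + m = 0 := by
  simpa [two_mul] using ZMod.natCast_self (2 * m)

lemma eq_add_natCast_comm {i j : ZMod (2 * m)} : i = j + m ↔ j = i + m := by
  constructor <;> rintro rfl <;> rw [add_assoc, natCast_add_self, add_zero]

lemma xa_pow_three (i : ZMod (2 * m)) : xa i ^ 3 = xa (i + (m : ZMod (2 * m))) := by
  rw [pow_succ, xa_sq, a_mul_xa, sub_eq_add_neg, neg_eq_of_add_eq_zero_left natCast_add_self]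

lemma xa_notMem_powers_a (i j : ZMod (2 * m)) : xa j ∉ Submonoid.powers (a i) := by
  simp [Submonoid.mem_powers_iff, a_pow]

def cliqueIndex : QuaternionGroup m → Option (Sym2 (ZMod (2 * m)))
  | a _ => none
  | xa i => some s(i, i + (m : ZMod (2 * m)))

lemma cliqueIndex_xa_eq_iff {i j : ZMod (2 * m)} :
    cliqueIndex (xa i) = cliqueIndex (xa j) ↔ j = i ∨ j = i + m := by
  simp only [cliqueIndex, Option.some.injEq, Sym2.eq_iff]
  constructor
  · rintro (⟨rfl, -⟩ | ⟨-, rfl⟩)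
    exacts [.inl rfl, .inr rfl]
  · rintro (rfl | rfl)
    exacts [.inl ⟨rfl, rfl⟩, .inr ⟨eq_add_natCast_comm.2 rfl, rfl⟩]

variable [NeZero m]

lemma a_mem_powers_a_iff {i j : ZMod (2 * m)} : a j ∈ Submonoid.powers (a i) ↔ i ∣ j := by
  simp only [Submonoid.mem_powers_iff, a_pow, a.injEq]
  constructor
  · rintro ⟨k, rfl⟩
    exact Dvd.intro_left _ rfl
  · rintro ⟨r, rfl⟩
    exact ⟨r.val, by rw [ZMod.natCast_zmod_val, mul_comm r]⟩

lemma mem_powers_xa_iff {i : ZMod (2 * m)} {x : QuaternionGroup m} :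
    x ∈ Submonoid.powers (xa i) ↔ x = 1 ∨ x = a m ∨ x = xa i ∨ x = xa (i + (m : ZMod (2 * m))) := by
  rw [Submonoid.mem_powers_iff]
  constructor
  · rintro ⟨k, rfl⟩
    rw [← pow_mod_orderOf, orderOf_xa]
    have : k % 4 < 4 := Nat.mod_lt k (by norm_num)
    interval_cases k % 4
    exacts [.inl (pow_zero _), .inr (.inr (.inl (pow_one _))), .inr (.inl (xa_sq i)),
      .inr (.inr (.inr (xa_pow_three i)))]
  · rintro (rfl | rfl | rfl | rfl)
    exacts [⟨0, pow_zero _⟩, ⟨2, xa_sq i⟩, ⟨1, pow_one _⟩, ⟨3, xa_pow_three i⟩]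

lemma xa_mem_powers_xa_iff {i j : ZMod (2 * m)} :
    xa j ∈ Submonoid.powers (xa i) ↔ j = i ∨ j = i + m := by
  simp only [mem_powers_xa_iff, one_def, reduceCtorEq, xa.injEq, false_or]

lemma isDominatingVertex_a_natCast {e : ℕ} (hm : m = 2 ^ e) :
    (powerGraph (QuaternionGroup m)).IsDominatingVertex (a m) := by
  intro x hx
  refine powerGraph_adj_iff.2 ⟨hx.symm, ?_⟩
  cases x with
  | xa j => exact .inl ⟨2, xa_sq j⟩
  | a j =>
    by_cases hj : j = 0
    · exact .inr (hj ▸ one_def (n := m) ▸ Submonoid.one_mem _)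
    · refine .inl (a_mem_powers_a_iff.2 ?_)
      have h := ZMod.dvd_natCast_of_eq_prime_pow_succ Nat.prime_two (by rw [hm, pow_succ']) hj
      rwa [← hm] at h

lemma a_notMem_powers_xa {e : ℕ} (hm : m = 2 ^ e) {i : ZMod (2 * m)}
    (hi : ¬ (powerGraph (QuaternionGroup m)).IsDominatingVertex (a i)) (j : ZMod (2 * m)) :
    a i ∉ Submonoid.powers (xa j) := by
  rw [mem_powers_xa_iff]
  rintro (hi1 | him | h | h)
  · exact hi (hi1 ▸ powerGraph_isDominatingVertex_one)
  · exact hi (him ▸ isDominatingVertex_a_natCast hm)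
  all_goals cases h

lemma powerGraph_adj_iff_cliqueIndex_eq {e : ℕ} (hm : m = 2 ^ e) {x y : QuaternionGroup m}
    (hx : ¬ (powerGraph (QuaternionGroup m)).IsDominatingVertex x)
    (hy : ¬ (powerGraph (QuaternionGroup m)).IsDominatingVertex y) :
    (powerGraph (QuaternionGroup m)).Adj x y ↔ x ≠ y ∧ cliqueIndex x = cliqueIndex y := by
  rw [powerGraph_adj_iff]
  refine and_congr_right fun _ => ?_
  cases x with
  | a i =>
    cases y with
    | a j =>
      simpa [cliqueIndex, a_mem_powers_a_iff] using
        (ZMod.dvd_or_dvd_of_eq_prime_pow Nat.prime_two (by rw [hm, pow_succ']) i j).symm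
    | xa j => simp [cliqueIndex, a_notMem_powers_xa hm hx, xa_notMem_powers_a]
  | xa i =>
    cases y with
    | a j => simp [cliqueIndex, a_notMem_powers_xa hm hy, xa_notMem_powers_a]
    | xa j =>
      rw [xa_mem_powers_xa_iff, xa_mem_powers_xa_iff, eq_add_natCast_comm, eq_comm (a := i),
        or_self, cliqueIndex_xa_eq_iff]

end QuaternionGroup

theorem properPowerGraph_quaternion_isLineGraph_general (n : ℕ) :
    IsLineGraph (properPowerGraph (QuaternionGroup (2 ^ (n - 2)))) :=
  isLineGraph_of_adj_iff (fun x => QuaternionGroup.cliqueIndex x.val) fun x y =>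
    (QuaternionGroup.powerGraph_adj_iff_cliqueIndex_eq rfl x.2 y.2).trans
      (and_congr_left' Subtype.coe_ne_coe)

theorem properPowerGraph_quaternion_isLineGraph (n : ℕ) (hn : 3 ≤ n) :
    IsLineGraph (properPowerGraph (QuaternionGroup (2 ^ (n - 2)))) :=
  properPowerGraph_quaternion_isLineGraph_general n
end

section
/- Let p be a prime and let G be a finite non-abelian group whose exponent equals p (i.e., every element of G satisfies g^p = e). Then the proper power graph P**(G) is a line graph: there exists a graph Γ such that P**(G) is isomorphic to the line graph of Γ. -/
/-!
In a group of prime exponent `p` every nontrivial element generates a subgroup of order `p`, so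
two nontrivial elements are adjacent in the power graph exactly when they generate the same
subgroup, and the identity is a dominating vertex. Hence the proper power graph is a disjoint union
of cliques indexed by cyclic subgroups: the line graph of the disjoint union of stars in which each
vertex becomes an edge from a new leaf to a centre standing for the subgroup it generates.
-/

namespace SimpleGraph

variable {V W : Type}

def fiberStars (f : V → W) : SimpleGraph (V ⊕ W) where
  Adj
    | .inl v, .inr w => f v = w
    | .inr w, .inl v => f v = w
    | _, _ => False
  symm := by
    constructor
    rintro (_ | _) (_ | _) h <;> exact h
  loopless := by
    constructor
    rintro (_ | _) h <;> exact h

def fiberStarsEdge (f : V → W) (v : V) : (fiberStars f).edgeSet :=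
  ⟨s(.inl v, .inr (f v)), rfl⟩

theorem fiberStarsEdge_bijective (f : V → W) : Function.Bijective (fiberStarsEdge f) := by
  refine ⟨fun v₁ v₂ h => ?_, ?_⟩
  · rcases Sym2.eq_iff.mp (congrArg Subtype.val h) with ⟨h, -⟩ | ⟨h, -⟩
    · exact Sum.inl_injective h
    · exact absurd h Sum.inl_ne_inr
  · rintro ⟨e, he⟩
    induction e with
    | h a b =>
      rcases a with v | w <;> rcases b with v' | w' <;> simp only [fiberStars, mem_edgeSet] at he
      · exact ⟨v, by simp [fiberStarsEdge, he]⟩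
      · exact ⟨v', by simp [fiberStarsEdge, ← he, Sym2.eq_swap]⟩

theorem lineGraph_fiberStars_adj (f : V → W) (v₁ v₂ : V) :
    (fiberStars f).lineGraph.Adj (fiberStarsEdge f v₁) (fiberStarsEdge f v₂) ↔
      v₁ ≠ v₂ ∧ f v₁ = f v₂ := by
  rw [lineGraph_adj_iff_exists, (fiberStarsEdge_bijective f).injective.ne_iff]
  refine and_congr_right fun hne => ?_
  simp [fiberStarsEdge, hne]

theorem isLineGraph_of_adj_iff (H : SimpleGraph V) (f : V → W)
    (hadj : ∀ x y, H.Adj x y ↔ x ≠ y ∧ f x = f y) : IsLineGraph H :=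
  ⟨V ⊕ W, fiberStars f, ⟨⟨Equiv.ofBijective _ (fiberStarsEdge_bijective f), fun {x y} => by
    rw [Equiv.ofBijective_apply, Equiv.ofBijective_apply, lineGraph_fiberStars_adj, hadj]⟩⟩⟩

end SimpleGraph

section PowerGraph

variable {G : Type} [Group G]

theorem exists_pos_pow_eq_iff_mem_zpowers {x y : G} (hx : IsOfFinOrder x) :
    (∃ n : ℕ, 0 < n ∧ x ^ n = y) ↔ y ∈ Subgroup.zpowers x := by
  refine ⟨fun ⟨n, _, hn⟩ => hn ▸ Subgroup.pow_mem _ (Subgroup.mem_zpowers x) n, fun hy => ?_⟩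
  obtain ⟨n, rfl⟩ := hx.mem_powers_iff_mem_zpowers.mpr hy
  -- `x ^ 0 = x ^ orderOf x`, so the exponent can be taken positive
  exact ⟨n + orderOf x, by have := hx.orderOf_pos; omega,
    by rw [pow_add, pow_orderOf_eq_one, mul_one]⟩

theorem powerGraph_adj_iff_of_isOfFinOrder {x y : G} (hx : IsOfFinOrder x) (hy : IsOfFinOrder y) :
    (powerGraph G).Adj x y ↔ x ≠ y ∧ (x ∈ Subgroup.zpowers y ∨ y ∈ Subgroup.zpowers x) :=
  and_congr_right' <|
    or_congr (exists_pos_pow_eq_iff_mem_zpowers hy) (exists_pos_pow_eq_iff_mem_zpowers hx)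

theorem powerGraph_isDominatingVertex_one_s14 (hG : IsMulTorsion G) :
    (powerGraph G).IsDominatingVertex 1 := fun u hu =>
  (powerGraph_adj_iff_of_isOfFinOrder (hG 1) (hG u)).mpr ⟨hu.symm, Or.inl (Subgroup.one_mem _)⟩

theorem zpowers_eq_of_mem_zpowers_of_orderOf_prime {x y : G} (hy : (orderOf y).Prime) (hx : x ≠ 1)
    (hxy : x ∈ Subgroup.zpowers y) : Subgroup.zpowers x = Subgroup.zpowers y := by
  have hcard : orderOf x = orderOf y :=
    (hy.eq_one_or_self_of_dvd _ (orderOf_dvd_of_mem_zpowers hxy)).resolve_left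
      (mt orderOf_eq_one_iff.mp hx)
  have : Finite (Subgroup.zpowers y) :=
    Nat.finite_of_card_ne_zero (by rw [Nat.card_zpowers]; exact hy.ne_zero)
  exact Subgroup.eq_of_le_of_card_ge (Subgroup.zpowers_le.mpr hxy)
    (by rw [Nat.card_zpowers, Nat.card_zpowers, hcard])

theorem isMulTorsion_of_exponent_eq_prime {p : ℕ} (hp : p.Prime)
    (hexp : Monoid.exponent G = p) : IsMulTorsion G := fun _ =>
  (Monoid.exponent_pos.mp (hexp ▸ hp.pos)).isOfFinOrder

theorem orderOf_eq_of_exponent_eq_prime {p : ℕ} (hp : p.Prime)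
    (hexp : Monoid.exponent G = p) {x : G} (hx : x ≠ 1) : orderOf x = p :=
  have : Fact p.Prime := ⟨hp⟩
  orderOf_eq_prime (hexp ▸ Monoid.pow_exponent_eq_one x) hx

theorem powerGraph_adj_iff_of_exponent_eq_prime {p : ℕ} (hp : p.Prime)
    (hexp : Monoid.exponent G = p) {x y : G} (hx : x ≠ 1) (hy : y ≠ 1) :
    (powerGraph G).Adj x y ↔ x ≠ y ∧ Subgroup.zpowers x = Subgroup.zpowers y := by
  have hprime {z : G} (hz : z ≠ 1) : (orderOf z).Prime :=
    orderOf_eq_of_exponent_eq_prime hp hexp hz ▸ hp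
  have htors := isMulTorsion_of_exponent_eq_prime hp hexp
  rw [powerGraph_adj_iff_of_isOfFinOrder (htors x) (htors y)]
  refine and_congr_right fun _ => ⟨?_, fun h => Or.inl (h ▸ Subgroup.mem_zpowers x)⟩
  rintro (h | h)
  · exact zpowers_eq_of_mem_zpowers_of_orderOf_prime (hprime hy) hx h
  · exact (zpowers_eq_of_mem_zpowers_of_orderOf_prime (hprime hx) hy h).symm

end PowerGraph

theorem properPowerGraph_isLineGraph_of_exponent_prime_general (p : ℕ) (hp : p.Prime)
    (G : Type) [Group G]
    (hexp : Monoid.exponent G = p) :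
    IsLineGraph (properPowerGraph G) := by
  have hne_one (x : {x : G | ¬ (powerGraph G).IsDominatingVertex x}) : (x : G) ≠ 1 := fun hx =>
    x.2 (hx ▸ powerGraph_isDominatingVertex_one_s14 (isMulTorsion_of_exponent_eq_prime hp hexp))
  exact SimpleGraph.isLineGraph_of_adj_iff _ (fun x => Subgroup.zpowers (x : G)) fun x y =>
    (powerGraph_adj_iff_of_exponent_eq_prime hp hexp (hne_one x) (hne_one y)).trans
    (and_congr_left' Subtype.coe_ne_coe)

theorem properPowerGraph_isLineGraph_of_exponent_prime (p : ℕ) (hp : p.Prime)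
    (G : Type) [Group G] [Finite G] (hna : ∃ a b : G, a * b ≠ b * a)
    (hexp : Monoid.exponent G = p) :
    IsLineGraph (properPowerGraph G) :=
  properPowerGraph_isLineGraph_of_exponent_prime_general p hp G hexp
end
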